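/- arXiv:2212.09704 — 3 statements merged into one kernel-verified Lean document; each statement's English description precedes it below -/
import Mathlib

section
/- Decodability of the reading phase (case 1, subpacketization ℓ = (N-2)/2): Let F be a field, let f_1, …, f_ℓ be ℓ distinct elements of F, and let α_1, …, α_{2ℓ+2} be 2ℓ+2 distinct elements of F, none of which equals any f_k. Suppose w, w' ∈ F^ℓ and p, p' are polynomials over F of degree at most ℓ+1 such that for every n ∈ {1, …, 2ℓ+2}, ∑_{k=1}^ℓ w_k/(f_k − α_n) + p(α_n) = ∑_{k=1}^ℓ w'_k/(f_k − α_n) + p'(α_n). Then w = w' and p = p'. Consequently, a user receiving the N = 2ℓ+2 answers of the form ∑_{k=1}^ℓ W_k/(f_k − α_n) + P_{α_n}(ℓ+1) can uniquely recover the ℓ subpacket symbols W_1, …, W_ℓ. -/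
open Finset Polynomial

/-- Decodability of the reading phase (case 1, subpacketization `ℓ = (N-2)/2`):
with `N = 2ℓ+2` databases, the answers `∑ k, W k / (f k - α n) + p.eval (α n)`
uniquely determine the subpacket symbols `W` and the noise polynomial `p`
(of degree at most `ℓ+1`). -/
theorem reading_phase_decodable_case1 {F : Type*} [Field F] (ℓ : ℕ)
    (f : Fin ℓ → F) (α : Fin (2 * ℓ + 2) → F)
    (hf : Function.Injective f) (hα : Function.Injective α)
    (hfα : ∀ n k, α n ≠ f k)
    (w w' : Fin ℓ → F) (p p' : F[X])
    (hp : p.degree ≤ (ℓ + 1 : ℕ)) (hp' : p'.degree ≤ (ℓ + 1 : ℕ))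
    (h : ∀ n, (∑ k, w k / (f k - α n)) + p.eval (α n)
            = (∑ k, w' k / (f k - α n)) + p'.eval (α n)) :
    w = w' ∧ p = p' := by
  classical
  set d : Fin ℓ → F := fun k => w k - w' k with hd
  set q : F[X] := p - p' with hq
  set Q : F[X] := ∏ k, (C (f k) - X) with hQ
  set R : F[X] :=
    (∑ k, C (d k) * ∏ j ∈ univ.erase k, (C (f j) - X)) + q * Q with hR
  have hdeg1 : ∀ k : Fin ℓ, (C (f k) - X).degree = 1 := by
    intro k
    have : (C (f k) - X) = -(X - C (f k)) := by ring
    rw [this, degree_neg, degree_X_sub_C]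
  have hdegQ : Q.degree ≤ (ℓ : ℕ) := by
    refine le_trans (degree_prod_le _ _) ?_
    calc ∑ k : Fin ℓ, (C (f k) - X).degree
        ≤ ∑ _k : Fin ℓ, (1 : WithBot ℕ) := by
          refine Finset.sum_le_sum fun k _ => ?_
          exact le_of_eq (hdeg1 k)
      _ = ((ℓ : ℕ) : WithBot ℕ) := by
          rw [Finset.sum_const, Finset.card_univ, Fintype.card_fin, nsmul_eq_mul, mul_one]
  have hdegR : R.degree ≤ ((2 * ℓ + 1 : ℕ) : WithBot ℕ) := by
    refine le_trans (degree_add_le _ _) (max_le ?_ ?_)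
    · refine le_trans (degree_sum_le _ _) ?_
      refine Finset.sup_le fun k _ => ?_
      refine le_trans (degree_mul_le _ _) ?_
      have h1 : (C (d k)).degree ≤ 0 := degree_C_le
      have h2 : (∏ j ∈ univ.erase k, (C (f j) - X)).degree ≤ ((ℓ : ℕ) : WithBot ℕ) := by
        refine le_trans (degree_prod_le _ _) ?_
        calc ∑ j ∈ univ.erase k, (C (f j) - X).degree
            ≤ ∑ _j ∈ univ.erase k, (1 : WithBot ℕ) := by
              refine Finset.sum_le_sum fun j _ => ?_
              exact le_of_eq (hdeg1 j)
          _ = ((#(univ.erase k) : ℕ) : WithBot ℕ) := by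
              rw [Finset.sum_const, nsmul_eq_mul, mul_one]
          _ ≤ ((ℓ : ℕ) : WithBot ℕ) := by
              have : #(univ.erase k) ≤ ℓ :=
                le_trans (Finset.card_le_card (Finset.erase_subset _ _)) (by simp)
              exact_mod_cast this
      calc (C (d k)).degree + (∏ j ∈ univ.erase k, (C (f j) - X)).degree
          ≤ 0 + ((ℓ : ℕ) : WithBot ℕ) := add_le_add h1 h2
        _ = ((ℓ : ℕ) : WithBot ℕ) := by simp
        _ ≤ ((2 * ℓ + 1 : ℕ) : WithBot ℕ) := by
            exact_mod_cast (by omega : ℓ ≤ 2 * ℓ + 1)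
    · refine le_trans (degree_mul_le _ _) ?_
      have hq' : q.degree ≤ ((ℓ + 1 : ℕ) : WithBot ℕ) :=
        le_trans (degree_sub_le _ _) (max_le hp hp')
      calc q.degree + Q.degree ≤ ((ℓ + 1 : ℕ) : WithBot ℕ) + ((ℓ : ℕ) : WithBot ℕ) :=
            add_le_add hq' hdegQ
        _ = ((2 * ℓ + 1 : ℕ) : WithBot ℕ) := by
            rw [← Nat.cast_add]; congr 1; omega
  have hevalR : ∀ n, R.eval (α n) = 0 := by
    intro n
    have hne : ∀ k, f k - α n ≠ 0 := fun k => sub_ne_zero.mpr (fun he => hfα n k he.symm)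
    have hQev : Q.eval (α n) = ∏ k, (f k - α n) := by
      simp [hQ, eval_prod]
    have hsum : ∀ k : Fin ℓ,
        (C (d k) * ∏ j ∈ univ.erase k, (C (f j) - X)).eval (α n)
          = d k / (f k - α n) * ∏ j, (f j - α n) := by
      intro k
      rw [eval_mul, eval_C, eval_prod]
      simp only [eval_sub, eval_C, eval_X]
      rw [← Finset.mul_prod_erase _ _ (mem_univ k), ← mul_assoc,
        div_mul_cancel₀ _ (hne k)]
    have hsub : ∑ k, (w k - w' k) / (f k - α n)
        = (∑ k, w k / (f k - α n)) - ∑ k, w' k / (f k - α n) := by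
      rw [← Finset.sum_sub_distrib]
      exact Finset.sum_congr rfl fun k _ => sub_div _ _ _
    have key : (∑ k, d k / (f k - α n)) + q.eval (α n) = 0 := by
      simp only [hd, hq, eval_sub]
      rw [hsub]
      linear_combination h n
    calc R.eval (α n)
        = (∑ k, d k / (f k - α n) * ∏ j, (f j - α n)) + q.eval (α n) * ∏ j, (f j - α n) := by
          rw [hR, eval_add, eval_mul, hQev, eval_finset_sum]
          congr 1
          exact Finset.sum_congr rfl fun k _ => hsum k
      _ = ((∑ k, d k / (f k - α n)) + q.eval (α n)) * ∏ j, (f j - α n) := by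
          rw [add_mul, Finset.sum_mul]
      _ = 0 := by rw [key, zero_mul]
  have hR0 : R = 0 := by
    apply eq_zero_of_natDegree_lt_card_of_eval_eq_zero R hα hevalR
    have : R.natDegree ≤ 2 * ℓ + 1 := natDegree_le_iff_degree_le.mpr hdegR
    simp only [Fintype.card_fin]
    omega
  have hd0 : ∀ k, d k = 0 := by
    intro k
    have hQ0 : Q.eval (f k) = 0 := by
      rw [hQ, eval_prod]
      exact Finset.prod_eq_zero (mem_univ k) (by simp)
    have hterm : ∀ i ∈ univ.erase k,
        (C (d i) * ∏ j ∈ univ.erase i, (C (f j) - X)).eval (f k) = 0 := by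
      intro i hi
      rw [eval_mul, eval_prod]
      refine mul_eq_zero_of_right _ ?_
      refine Finset.prod_eq_zero
        (Finset.mem_erase.mpr ⟨(Finset.mem_erase.mp hi).1.symm, mem_univ k⟩) ?_
      simp
    have h0 : (∑ i, (C (d i) * ∏ j ∈ univ.erase i, (C (f j) - X)).eval (f k)) = 0 := by
      have h0 := congrArg (eval (f k)) hR0
      rw [hR, eval_add, eval_mul, hQ0, mul_zero, add_zero, eval_zero, eval_finset_sum] at h0
      exact h0
    have hev2 : (∑ i, (C (d i) * ∏ j ∈ univ.erase i, (C (f j) - X)).eval (f k))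
        = d k * ∏ j ∈ univ.erase k, (f j - f k) := by
      rw [← Finset.add_sum_erase _ _ (mem_univ k), Finset.sum_eq_zero hterm, add_zero,
        eval_mul, eval_C, eval_prod]
      simp only [eval_sub, eval_C, eval_X]
    have hprod : ∏ j ∈ univ.erase k, (f j - f k) ≠ 0 := by
      refine Finset.prod_ne_zero_iff.mpr fun j hj => ?_
      exact sub_ne_zero.mpr fun he => (Finset.mem_erase.mp hj).1 (hf he)
    have : d k * ∏ j ∈ univ.erase k, (f j - f k) = 0 := by rw [← hev2, h0]
    rcases mul_eq_zero.mp this with h1 | h1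
    · exact h1
    · exact absurd h1 hprod
  have hQne : Q ≠ 0 := by
    refine Finset.prod_ne_zero_iff.mpr fun k _ => ?_
    intro hzero
    have := hdeg1 k
    rw [hzero, degree_zero] at this
    exact absurd this (by simp)
  have hsum0 : (∑ k, C (d k) * ∏ j ∈ univ.erase k, (C (f j) - X)) = 0 := by
    refine Finset.sum_eq_zero fun k _ => ?_
    rw [hd0 k]; simp
  have hqQ : q * Q = 0 := by
    have hthis := hR0
    rw [hR, hsum0, zero_add] at hthis
    exact hthis
  have hq0 : q = 0 := by
    rcases mul_eq_zero.mp hqQ with h1 | h1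
    · exact h1
    · exact absurd h1 hQne
  constructor
  · funext k
    have := hd0 k
    simpa [hd, sub_eq_zero] using this
  · exact sub_eq_zero.mp hq0
end

section
/- Update decomposition lemma: Let F be a field, let f_1, …, f_ℓ be distinct elements of F, let Δ_1, …, Δ_ℓ ∈ F and Z ∈ F. Define, for α ∈ F, U(α) = ∑_{k=1}^ℓ (∏_{r≠k}(f_r − α)) · (Δ_k / ∏_{r≠k}(f_r − f_k)) + (∏_{r=1}^ℓ (f_r − α)) · Z. Then for every m ∈ {1, …, ℓ} there exists a polynomial Q_m over F of degree at most ℓ−1 (whose coefficients do not depend on α) such that for every α ∈ F with α ∉ {f_1, …, f_ℓ}, U(α)/(f_m − α) = Δ_m/(f_m − α) + Q_m(α). -/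
open Finset Polynomial

/-- Update decomposition lemma: dividing the combined update
`U(α) = ∑ k, (∏_{r≠k}(f r − α)) · (Δ k / ∏_{r≠k}(f r − f k)) + (∏ r, (f r − α)) · Z`
by `(f m − α)` recovers `Δ m / (f m − α)` up to the evaluation of a polynomial of
degree at most `ℓ − 1` whose coefficients do not depend on `α`. -/
theorem update_decomposition {F : Type*} [Field F] (ℓ : ℕ) (hℓ : 1 ≤ ℓ)
    (f : Fin ℓ → F) (hf : Function.Injective f)
    (Δ : Fin ℓ → F) (Z : F) (U : F → F)
    (hU : ∀ α, U α = (∑ k, (∏ r ∈ univ \ {k}, (f r - α)) *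
          (Δ k / ∏ r ∈ univ \ {k}, (f r - f k))) + (∏ r, (f r - α)) * Z) :
    ∀ m : Fin ℓ, ∃ Q : F[X], Q.degree ≤ (ℓ - 1 : ℕ) ∧
      ∀ α : F, (∀ r, α ≠ f r) →
        U α / (f m - α) = Δ m / (f m - α) + Q.eval α := by
  intro m
  set c : Fin ℓ → F := fun k => ∏ r ∈ univ \ {k}, (f r - f k) with hc
  set P : F[X] := (∑ k, (∏ r ∈ univ \ {k}, (C (f r) - X)) * C (Δ k / c k)) +
      (∏ r, (C (f r) - X)) * C Z with hP
  have hPeval : ∀ α, P.eval α = U α := by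
    intro α
    rw [hU, hP]
    simp [eval_finset_sum, eval_prod, c]
  have hcm : c m ≠ 0 := by
    rw [hc]
    apply Finset.prod_ne_zero_iff.mpr
    intro r hr
    simp only [Finset.mem_sdiff, Finset.mem_univ, Finset.mem_singleton, true_and] at hr
    exact sub_ne_zero_of_ne (fun h => hr (hf h))
  have hroot : P.eval (f m) = Δ m := by
    rw [hP]
    simp only [eval_add, eval_mul, eval_finset_sum, eval_prod, eval_sub, eval_C, eval_X]
    have h2 : (∏ r, (f r - f m)) = 0 :=
      Finset.prod_eq_zero (Finset.mem_univ m) (by simp)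
    rw [h2, zero_mul, add_zero]
    rw [Finset.sum_eq_single m]
    · rw [show (∏ r ∈ univ \ {m}, (f r - f m)) = c m from rfl]
      field_simp
    · intro k _ hk
      have : (∏ r ∈ univ \ {k}, (f r - f m)) = 0 := by
        apply Finset.prod_eq_zero (by simp [hk.symm] : m ∈ univ \ {k})
        simp
      rw [this, zero_mul]
    · simp
  have hdvd : (X - C (f m)) ∣ (P - C (Δ m)) := by
    rw [dvd_iff_isRoot]
    simp [IsRoot, hroot]
  obtain ⟨Q', hQ'⟩ := hdvd
  have hdegP : P.degree ≤ (ℓ : ℕ) := by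
    rw [hP]
    apply le_trans (degree_add_le _ _)
    apply max_le
    · apply le_trans (degree_sum_le _ _)
      apply Finset.sup_le
      intro k _
      apply le_trans (degree_mul_le _ _)
      have h1 : (∏ r ∈ univ \ {k}, (C (f r) - X)).degree ≤ ((ℓ - 1 : ℕ) : WithBot ℕ) := by
        apply le_trans (degree_prod_le _ _)
        calc (∑ r ∈ univ \ {k}, (C (f r) - X).degree)
            ≤ ∑ r ∈ univ \ {k}, (1 : WithBot ℕ) := by
              apply Finset.sum_le_sum
              intro r _
              have : (C (f r) - X) = -(X - C (f r)) := by ring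
              rw [this, degree_neg, degree_X_sub_C]
          _ = ((ℓ - 1 : ℕ) : WithBot ℕ) := by
              rw [Finset.sum_const]
              simp [Finset.card_sdiff, Nat.cast_sub hℓ]
      calc (∏ r ∈ univ \ {k}, (C (f r) - X)).degree + (C (Δ k / c k)).degree
          ≤ ((ℓ - 1 : ℕ) : WithBot ℕ) + 0 := add_le_add h1 degree_C_le
        _ ≤ (ℓ : ℕ) := by
            rw [add_zero]
            exact_mod_cast Nat.sub_le ℓ 1
    · apply le_trans (degree_mul_le _ _)
      have h1 : (∏ r, (C (f r) - X)).degree ≤ ((ℓ : ℕ) : WithBot ℕ) := by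
        apply le_trans (degree_prod_le _ _)
        calc (∑ r, (C (f r) - X).degree)
            ≤ ∑ _r : Fin ℓ, (1 : WithBot ℕ) := by
              apply Finset.sum_le_sum
              intro r _
              have : (C (f r) - X) = -(X - C (f r)) := by ring
              rw [this, degree_neg, degree_X_sub_C]
          _ = ((ℓ : ℕ) : WithBot ℕ) := by simp
      calc (∏ r, (C (f r) - X)).degree + (C Z).degree
          ≤ ((ℓ : ℕ) : WithBot ℕ) + 0 := add_le_add h1 degree_C_le
        _ = (ℓ : ℕ) := add_zero _
  have hdegQ' : Q'.degree ≤ ((ℓ - 1 : ℕ) : WithBot ℕ) := by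
    by_cases hQ0 : Q' = 0
    · simp [hQ0]
    · have hXC : (X - C (f m)) ≠ (0 : F[X]) := X_sub_C_ne_zero _
      have hdeg : (P - C (Δ m)).degree ≤ (ℓ : ℕ) := by
        apply le_trans (degree_sub_le _ _)
        exact max_le hdegP (le_trans degree_C_le (by exact_mod_cast Nat.zero_le ℓ))
      rw [hQ', degree_mul, degree_X_sub_C] at hdeg
      rw [Polynomial.degree_eq_natDegree hQ0] at hdeg ⊢
      rw [Nat.cast_le]
      have : (1 + Q'.natDegree : WithBot ℕ) ≤ (ℓ : ℕ) := by exact_mod_cast hdeg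
      have h2 : 1 + Q'.natDegree ≤ ℓ := by exact_mod_cast this
      omega
  refine ⟨-Q', by simpa using hdegQ', ?_⟩
  intro α hα
  have hne : f m - α ≠ 0 := sub_ne_zero_of_ne (fun h => hα m h.symm)
  have hUα : U α = Δ m + (α - f m) * Q'.eval α := by
    rw [← hPeval]
    have := congrArg (Polynomial.eval α) hQ'
    simp only [eval_sub, eval_mul, eval_X, eval_C] at this
    linear_combination this
  rw [hUα, eval_neg]
  field_simp
  ring
end

section
/- Correctness of the writing phase within a segment (case 1): Let F be a field, let ℓ, m ≥ 1, let f_1, …, f_ℓ be distinct elements of F, let π be a permutation of {1, …, m}, let Δ ∈ F^{m×ℓ} (updates, with Δ_{s,·} = 0 for subpackets s not updated), let Z_1, …, Z_m ∈ F, and let Z̄ be any fixed mℓ × mℓ matrix over F. For α ∈ F define: (i) U_s(α) = ∑_{k=1}^ℓ (∏_{r≠k}(f_r − α)) Δ_{s,k}/∏_{r≠k}(f_r − f_k) + (∏_{r=1}^ℓ(f_r − α)) Z_s; (ii) the vector Û(α) ∈ F^{mℓ} whose j-th block of ℓ entries all equal U_{π(j)}(α); (iii) the matrix R(α) ∈ F^{mℓ×mℓ}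 whose (i, π^{-1}(i)) block equals diag(1/(f_1 − α), …, 1/(f_ℓ − α)) for each i, all other blocks zero, plus Z̄. Then there exist polynomials q_{i,k} over F of degree at most ℓ, with coefficients not depending on α, such that for every α ∈ F with α ∉ {f_1, …, f_ℓ} and every block index i and symbol index k, the ((i−1)ℓ + k)-th entry of R(α)Û(α) equals Δ_{i,k}/(f_k − α) + q_{i,k}(α). -/
/-!
Each combined update `U_s` is the evaluation of a polynomial `P_s` of degree at most `ℓ`
with `P_s(f_k) = Δ_{s,k}`. Dividing by `X - f_k` gives
`P_s(α) / (f_k - α) = Δ_{s,k} / (f_k - α) + q(α)` with `deg q ≤ ℓ`. The permutation block of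
`R(α)` picks out exactly `U_i(α) / (f_k - α)` at entry `(i, k)`, because the `π⁻¹ i`-th block
of `Û(α)` carries `U_i`; the noise part `Z̄ Û(α)` is a constant combination of the `P_s(α)`.
-/

open Finset Polynomial

section

variable {F : Type*} [Field F]

theorem Polynomial.exists_eval_div_sub_eq_add (P : F[X]) (x : F) :
    ∃ q : F[X], q.natDegree ≤ P.natDegree ∧
      ∀ α, α ≠ x → P.eval α / (x - α) = P.eval x / (x - α) + q.eval α := by
  refine ⟨-(P /ₘ (X - C x)), ?_, fun α hα => ?_⟩
  · rw [natDegree_neg, natDegree_divByMonic _ (monic_X_sub_C x)]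
    exact Nat.sub_le _ _
  · have hdiv := congrArg (eval α) (modByMonic_add_div P (X - C x))
    rw [modByMonic_X_sub_C_eq_C_eval, eval_add, eval_C, eval_mul, eval_sub, eval_X,
      eval_C] at hdiv
    have hne : x - α ≠ 0 := sub_ne_zero.mpr hα.symm
    rw [eval_neg]
    field_simp
    linear_combination -hdiv

variable {ι : Type*} (f : ι → F)

theorem natDegree_prod_C_sub_X_le (s : Finset ι) :
    (∏ r ∈ s, (C (f r) - X)).natDegree ≤ #s := by
  refine (natDegree_prod_le _ _).trans ?_
  simpa using sum_le_sum fun r (_ : r ∈ s) => (natDegree_sub_le (C (f r)) X).trans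
    (max_le ((natDegree_C _).trans_le zero_le_one) natDegree_X_le)

variable [Fintype ι] [DecidableEq ι]

/-- The paper's combined update `U_s(α)` as a polynomial in `α`: the Lagrange interpolant of `d`
at the nodes `f`, plus `c` times the node polynomial. -/
noncomputable def combinedUpdatePoly (d : ι → F) (c : F) : F[X] :=
  (∑ k, (∏ r ∈ univ \ {k}, (C (f r) - X)) * C (d k / ∏ r ∈ univ \ {k}, (f r - f k))) +
    (∏ r, (C (f r) - X)) * C c

theorem eval_combinedUpdatePoly (d : ι → F) (c α : F) :
    (combinedUpdatePoly f d c).eval α =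
      (∑ k, (∏ r ∈ univ \ {k}, (f r - α)) * (d k / ∏ r ∈ univ \ {k}, (f r - f k))) +
        (∏ r, (f r - α)) * c := by
  simp [combinedUpdatePoly, eval_finsetSum, eval_prod]

theorem natDegree_combinedUpdatePoly_le (d : ι → F) (c : F) :
    (combinedUpdatePoly f d c).natDegree ≤ Fintype.card ι := by
  refine (natDegree_add_le _ _).trans (max_le ?_ ?_)
  · refine natDegree_sum_le_of_forall_le _ _ fun k _ => (natDegree_mul_C_le _ _).trans ?_
    exact (natDegree_prod_C_sub_X_le f _).trans (card_le_univ _)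
  · exact (natDegree_mul_C_le _ _).trans (natDegree_prod_C_sub_X_le f univ)

theorem eval_node_combinedUpdatePoly (hf : Function.Injective f) (d : ι → F) (c : F) (k : ι) :
    (combinedUpdatePoly f d c).eval (f k) = d k := by
  have hnodal : ∏ r, (f r - f k) = 0 := prod_eq_zero (mem_univ k) (sub_self _)
  have hother : ∀ k' ≠ k, ∏ r ∈ univ \ {k'}, (f r - f k) = 0 := fun k' hk' =>
    prod_eq_zero (by simpa using hk'.symm) (sub_self _)
  have hself : ∏ r ∈ univ \ {k}, (f r - f k) ≠ 0 :=
    prod_ne_zero_iff.mpr fun r hr => sub_ne_zero.mpr (hf.ne (by simpa using hr))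
  rw [eval_combinedUpdatePoly, hnodal, zero_mul, add_zero,
    sum_eq_single k (fun k' _ hk' => by rw [hother k' hk', zero_mul]) (by simp),
    mul_div_cancel₀ _ hself]

end

theorem Matrix.mulVec_apply_of_blockPerm_add {ι κ R : Type*} [Fintype ι] [Fintype κ]
    [DecidableEq ι] [DecidableEq κ] [Semiring R] (π : Equiv.Perm ι) (g : κ → R)
    (M N : Matrix (ι × κ) (ι × κ) R) (u : ι → R) (v : ι × κ → R)
    (hM : ∀ i k j k', M (i, k) (j, k') = (if j = π⁻¹ i ∧ k' = k then g k else 0) + N (i, k) (j, k'))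
    (hv : ∀ j k, v (j, k) = u (π j)) (i : ι) (k : κ) :
    M.mulVec v (i, k) = g k * u i + ∑ j, ∑ k', N (i, k) (j, k') * u (π j) := by
  simp [mulVec, dotProduct, Fintype.sum_prod_type, hM, hv, add_mul, sum_add_distrib, ite_and]

theorem writing_phase_correctness_case1_general {F : Type*} [Field F]
    (ℓ m : ℕ)
    (f : Fin ℓ → F) (hf : Function.Injective f)
    (π : Equiv.Perm (Fin m))
    (Δ : Fin m → Fin ℓ → F) (Z : Fin m → F)
    (Zbar : Matrix (Fin m × Fin ℓ) (Fin m × Fin ℓ) F)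
    (U : Fin m → F → F)
    (hU : ∀ s α, U s α = (∑ k, (∏ r ∈ univ \ {k}, (f r - α)) *
          (Δ s k / ∏ r ∈ univ \ {k}, (f r - f k))) + (∏ r, (f r - α)) * Z s)
    (Uhat : F → (Fin m × Fin ℓ) → F)
    (hUhat : ∀ α j k, Uhat α (j, k) = U (π j) α)
    (R : F → Matrix (Fin m × Fin ℓ) (Fin m × Fin ℓ) F)
    (hR : ∀ α i k j k', R α (i, k) (j, k')
      = (if j = π⁻¹ i ∧ k' = k then 1 / (f k - α) else 0) + Zbar (i, k) (j, k')) :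
    ∃ q : Fin m → Fin ℓ → F[X], (∀ i k, (q i k).degree ≤ (ℓ : ℕ)) ∧
      ∀ α : F, (∀ r, α ≠ f r) → ∀ (i : Fin m) (k : Fin ℓ),
        (R α).mulVec (Uhat α) (i, k) = Δ i k / (f k - α) + (q i k).eval α := by
  set P : Fin m → F[X] := fun s => combinedUpdatePoly f (Δ s) (Z s)
  have hPdeg : ∀ s, (P s).natDegree ≤ ℓ := fun s =>
    (natDegree_combinedUpdatePoly_le f _ _).trans_eq (Fintype.card_fin ℓ)
  choose b hb_deg hb using fun i k => (P i).exists_eval_div_sub_eq_add (f k)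
  refine ⟨fun i k => b i k + ∑ p, C (Zbar (i, k) p) * P (π p.1), fun i k => ?_,
    fun α hα i k => ?_⟩
  · refine natDegree_le_iff_degree_le.mp ((natDegree_add_le _ _).trans (max_le ?_ ?_))
    · exact (hb_deg i k).trans (hPdeg i)
    · exact natDegree_sum_le_of_forall_le _ _ fun p _ =>
        (natDegree_C_mul_le _ _).trans (hPdeg _)
  · have hUP : ∀ s, U s α = (P s).eval α := fun s => by rw [hU, eval_combinedUpdatePoly]
    rw [Matrix.mulVec_apply_of_blockPerm_add π _ _ Zbar (fun s => U s α) _ (hR α) (hUhat α),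
      one_div_mul_eq_div, hUP, hb i k α (hα k), eval_node_combinedUpdatePoly f hf, eval_add,
      eval_finsetSum, add_assoc]
    simp only [hUP, eval_mul, eval_C, Fintype.sum_prod_type]

/-- Correctness of the writing phase within a segment (case 1): multiplying the
permuted update vector `Û(α)` (whose `j`-th block of `ℓ` entries all equal the
combined update `U (π j) α`) by the noise-added permutation-reversing matrix
`R(α)` (with block `diag (1/(f 1 − α), …, 1/(f ℓ − α))` at block position
`(i, π⁻¹ i)`, zero blocks elsewhere, plus an arbitrary fixed noise matrix `Z̄`)
yields, at entry `(i, k)`, the value `Δ i k / (f k − α)` plus the evaluation of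
a polynomial of degree at most `ℓ` whose coefficients do not depend on `α`. -/
theorem writing_phase_correctness_case1 {F : Type*} [Field F]
    (ℓ m : ℕ) (hℓ : 1 ≤ ℓ) (hm : 1 ≤ m)
    (f : Fin ℓ → F) (hf : Function.Injective f)
    (π : Equiv.Perm (Fin m))
    (Δ : Fin m → Fin ℓ → F) (Z : Fin m → F)
    (Zbar : Matrix (Fin m × Fin ℓ) (Fin m × Fin ℓ) F)
    (U : Fin m → F → F)
    (hU : ∀ s α, U s α = (∑ k, (∏ r ∈ univ \ {k}, (f r - α)) *
          (Δ s k / ∏ r ∈ univ \ {k}, (f r - f k))) + (∏ r, (f r - α)) * Z s)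
    (Uhat : F → (Fin m × Fin ℓ) → F)
    (hUhat : ∀ α j k, Uhat α (j, k) = U (π j) α)
    (R : F → Matrix (Fin m × Fin ℓ) (Fin m × Fin ℓ) F)
    (hR : ∀ α i k j k', R α (i, k) (j, k')
      = (if j = π⁻¹ i ∧ k' = k then 1 / (f k - α) else 0) + Zbar (i, k) (j, k')) :
    ∃ q : Fin m → Fin ℓ → F[X], (∀ i k, (q i k).degree ≤ (ℓ : ℕ)) ∧
      ∀ α : F, (∀ r, α ≠ f r) → ∀ (i : Fin m) (k : Fin ℓ),
        (R α).mulVec (Uhat α) (i, k) = Δ i k / (f k - α) + (q i k).eval α :=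
  writing_phase_correctness_case1_general ℓ m f hf π Δ Z Zbar U hU Uhat hUhat R hR
end
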